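/- Suppose all N subjects share a common design matrix W and matrix V, each yᵢ is an integrable random vector with mean E[yᵢ] = W(θ₀ + δ ∘ hᵢ / √N), and θ̂ is a random vector satisfying the score equation Σ_{i=1}^{N} u(yᵢ, θ̂) = 0 almost surely, with the estimated score process integrable. Then for every M ≤ N, at t = M/N, E[ N^{−1/2} Σ_{i=1}^{M} u(yᵢ, θ̂) ] = J · t · δ ∘ (h̄_M − h̄_N), where h̄_M = M^{−1} Σ_{i=1}^{M} hᵢ and h̄_N = N^{−1} Σ_{i=1}^{N} hᵢ. (This is the exact finite-sample form of the drift term J^{1/2} t_g δ ∘ (h̄_g − h̄) of the canonical monitoring process under local alternatives in Theorem 3, before standardization by J^{−1/2}.) -/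

import Mathlib

/-!
Write `S_K = ∑_{i<K} u(yᵢ, θ̂)` and `t = M/N`. The score is affine in `θ`, so in the bridge
`S_M - t S_N` the `θ̂`-terms cancel exactly, leaving a fixed linear map applied to
`∑_{i<M} yᵢ - t ∑_{i<N} yᵢ`. Since `S_N = 0` a.s., `S_M` equals this bridge a.s., and its
expectation is computed from the means of the `yᵢ` alone: the common part `Wθ₀` cancels in
the bridge again, and the local shifts contribute `(M/√N) W(δ ∘ (h̄_M - h̄_N))`.
-/

open Matrix Finset MeasureTheory

section Bridge

variable {E F : Type*} [AddCommGroup E] [Module ℝ E] [AddCommGroup F] [Module ℝ F]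

noncomputable def sumBridge (x : ℕ → E) (N M : ℕ) : E :=
  ∑ i ∈ range M, x i - ((M : ℝ) / N) • ∑ i ∈ range N, x i

theorem LinearMap.map_sumBridge (L : E →ₗ[ℝ] F) (x : ℕ → E) (N M : ℕ) :
    L (sumBridge x N M) = sumBridge (fun i => L (x i)) N M := by
  simp [sumBridge, map_sum]

theorem sumBridge_congr {x x' : ℕ → E} {N M : ℕ} (h : ∀ i < N, x i = x' i) (hMN : M ≤ N) :
    sumBridge x N M = sumBridge x' N M := by
  unfold sumBridge
  rw [sum_congr rfl fun i hi => h i ((mem_range.mp hi).trans_le hMN),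
    sum_congr rfl fun i hi => h i (mem_range.mp hi)]

theorem sumBridge_sub_const (x : ℕ → E) (z : E) {N M : ℕ} (hMN : M ≤ N) :
    sumBridge (fun i => x i - z) N M = sumBridge x N M := by
  have hratio : ((M : ℝ) / N) * N = M := by
    rcases Nat.eq_zero_or_pos N with rfl | hN
    · simp [Nat.le_zero.mp hMN]
    · exact div_mul_cancel₀ _ (by positivity)
  simp only [sumBridge, sum_sub_distrib, sum_const, card_range, smul_sub]
  rw [← Nat.cast_smul_eq_nsmul ℝ N, ← Nat.cast_smul_eq_nsmul ℝ M, smul_smul, hratio]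
  abel

theorem sumBridge_const_add (x : ℕ → E) (z : E) {N M : ℕ} (hMN : M ≤ N) :
    sumBridge (fun i => z + x i) N M = sumBridge x N M := by
  simpa [sub_neg_eq_add, add_comm] using sumBridge_sub_const x (-z) hMN

theorem sumBridge_eq_smul_sub_average (x : ℕ → E) (N M : ℕ) :
    sumBridge x N M =
      (M : ℝ) • ((M : ℝ)⁻¹ • ∑ i ∈ range M, x i - (N : ℝ)⁻¹ • ∑ i ∈ range N, x i) := by
  rcases Nat.eq_zero_or_pos M with rfl | hM
  · simp [sumBridge]
  · rw [sumBridge, smul_sub, smul_inv_smul₀ (by positivity), smul_smul, div_eq_mul_inv]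

theorem LinearMap.sum_range_map_sub_eq_map_sumBridge (L : E →ₗ[ℝ] F) {x : ℕ → E} {z : E}
    {N M : ℕ} (hsum : ∑ i ∈ Finset.range N, L (x i - z) = 0) (hMN : M ≤ N) :
    ∑ i ∈ Finset.range M, L (x i - z) = L (sumBridge x N M) :=
  calc ∑ i ∈ Finset.range M, L (x i - z) = sumBridge (fun i => L (x i - z)) N M := by
        rw [sumBridge, hsum, smul_zero, sub_zero]
    _ = L (sumBridge x N M) := by rw [← L.map_sumBridge, sumBridge_sub_const _ _ hMN]

theorem sumBridge_mulVec_local_shift {m p : Type*} [Fintype p] (W : Matrix m p ℝ)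
    (θ₀ δ : p → ℝ) (s : ℝ) (h : ℕ → p → ℝ) {N M : ℕ} (hMN : M ≤ N) :
    sumBridge (fun i => W *ᵥ (θ₀ + s • (δ * h i))) N M =
      (s * M) • W *ᵥ (δ * ((M : ℝ)⁻¹ • ∑ i ∈ range M, h i - (N : ℝ)⁻¹ • ∑ i ∈ range N, h i)) :=
  calc sumBridge (fun i => W *ᵥ (θ₀ + s • (δ * h i))) N M
      = W *ᵥ sumBridge (fun i => θ₀ + s • (δ * h i)) N M := (W.mulVecLin.map_sumBridge _ N M).symm
    _ = W *ᵥ (s • LinearMap.mulLeft ℝ δ) (sumBridge h N M) := by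
        rw [sumBridge_const_add _ _ hMN, LinearMap.map_sumBridge]; rfl
    _ = _ := by
        rw [sumBridge_eq_smul_sub_average, LinearMap.smul_apply, LinearMap.map_smul,
          LinearMap.mulLeft_apply, smul_smul, mulVec_smul]

end Bridge

section Integral

variable {Ω : Type*} [MeasurableSpace Ω] {μ : Measure Ω} {m n : Type*} [Fintype m] [Fintype n]

theorem integrable_sumBridge {x : ℕ → Ω → n → ℝ} {N M : ℕ}
    (hx : ∀ i < N, Integrable (x i) μ) (hMN : M ≤ N) :
    Integrable (fun ω => sumBridge (fun i => x i ω) N M) μ :=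
  (integrable_finsetSum _ fun i hi => hx i ((mem_range.mp hi).trans_le hMN)).sub
    ((integrable_finsetSum _ fun i hi => hx i (mem_range.mp hi)).fun_smul _)

theorem integral_sumBridge {x : ℕ → Ω → n → ℝ} {N M : ℕ}
    (hx : ∀ i < N, Integrable (x i) μ) (hMN : M ≤ N) :
    ∫ ω, sumBridge (fun i => x i ω) N M ∂μ = sumBridge (fun i => ∫ ω, x i ω ∂μ) N M := by
  unfold sumBridge
  rw [integral_sub (integrable_finsetSum _ fun i hi => hx i ((mem_range.mp hi).trans_le hMN))
      ((integrable_finsetSum _ fun i hi => hx i (mem_range.mp hi)).fun_smul _),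
    integral_smul, integral_finsetSum _ fun i hi => hx i ((mem_range.mp hi).trans_le hMN),
    integral_finsetSum _ fun i hi => hx i (mem_range.mp hi)]

theorem integral_mulVec_apply (A : Matrix m n ℝ) {Y : Ω → n → ℝ} (hY : Integrable Y μ) (k : m) :
    ∫ ω, (A *ᵥ Y ω) k ∂μ = (A *ᵥ ∫ ω, Y ω ∂μ) k := by
  have hAY : Integrable (fun ω => A *ᵥ Y ω) μ :=
    A.mulVecLin.toContinuousLinearMap.integrable_comp hY
  rw [← eval_integral hAY.eval]
  exact congrFun (A.mulVecLin.toContinuousLinearMap.integral_comp_comm hY) k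

end Integral

theorem estimated_score_process_drift_general
    {n p : ℕ} (σ : ℝ)
    (W : Matrix (Fin n) (Fin p) ℝ) (V : Matrix (Fin n) (Fin n) ℝ)
    (u : (Fin n → ℝ) → (Fin p → ℝ) → (Fin p → ℝ))
    (hu : ∀ y θ, u y θ = (σ ^ 2)⁻¹ • ((Wᵀ * V⁻¹) *ᵥ (y - W *ᵥ θ)))
    (J : Matrix (Fin p) (Fin p) ℝ)
    (hJ : J = (σ ^ 2)⁻¹ • (Wᵀ * V⁻¹ * W))
    {Ω : Type*} [MeasureSpace Ω]
    (N : ℕ) (y : ℕ → Ω → Fin n → ℝ)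
    (hyInt : ∀ i, i < N → ∀ j, Integrable (fun ω => y i ω j))
    (θ₀ δ : Fin p → ℝ) (h : ℕ → Fin p → ℝ)
    (hmean : ∀ i, i < N → ∀ j,
      ∫ ω, y i ω j = (W *ᵥ (θ₀ + (Real.sqrt N)⁻¹ • (δ * h i))) j)
    (θhat : Ω → Fin p → ℝ)
    (hscore : ∀ᵐ ω, ∑ i ∈ range N, u (y i ω) (θhat ω) = 0)
    (M : ℕ) (hMN : M ≤ N)
    (hbarM hbarN : Fin p → ℝ)
    (hhbarM : hbarM = (M : ℝ)⁻¹ • ∑ i ∈ range M, h i)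
    (hhbarN : hbarN = (N : ℝ)⁻¹ • ∑ i ∈ range N, h i) :
    ∀ k, ∫ ω, ((Real.sqrt N)⁻¹ • ∑ i ∈ range M, u (y i ω) (θhat ω)) k =
      (((M : ℝ) / N) • (J *ᵥ (δ * (hbarM - hbarN)))) k := by
  intro k
  set s := (Real.sqrt N)⁻¹
  set A := (σ ^ 2)⁻¹ • (Wᵀ * V⁻¹)
  have hscoreLin : ∀ y θ, u y θ = A.mulVecLin (y - W *ᵥ θ) := fun y θ =>
    (hu y θ).trans (smul_mulVec _ _ _).symm
  have hyVecInt : ∀ i < N, Integrable (y i) := fun i hi => Integrable.of_eval (hyInt i hi)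
  have hprocess : ∀ᵐ ω, ((s • ∑ i ∈ range M, u (y i ω) (θhat ω)) k) =
      ((s • A) *ᵥ sumBridge (fun i => y i ω) N M) k := by
    filter_upwards [hscore] with ω hω
    simp only [hscoreLin] at hω ⊢
    rw [A.mulVecLin.sum_range_map_sub_eq_map_sumBridge hω hMN, smul_mulVec, mulVecLin_apply]
  have hmeanBridge : ∫ ω, sumBridge (fun i => y i ω) N M =
      (s * M) • W *ᵥ (δ * (hbarM - hbarN)) := by
    rw [integral_sumBridge hyVecInt hMN, sumBridge_congr (fun i hi => funext fun j =>
      (eval_integral (hyInt i hi) j).trans (hmean i hi j)) hMN,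
      sumBridge_mulVec_local_shift W θ₀ δ s h hMN, hhbarM, hhbarN]
  have hs : s * (s * M) = M / N := by
    rw [← mul_assoc, ← mul_inv, Real.mul_self_sqrt (Nat.cast_nonneg _), inv_mul_eq_div]
  rw [integral_congr_ae hprocess, integral_mulVec_apply _ (integrable_sumBridge hyVecInt hMN),
    hmeanBridge, hJ, smul_mulVec, mulVec_smul, mulVec_mulVec, smul_smul, hs, smul_mul]

/-- With common `W` and `V`, mean `E[yᵢ] = W(θ₀ + δ ∘ hᵢ/√N)`,
and a random `θ̂` solving the score equation `Σ_{i=1}^N u(yᵢ, θ̂) = 0` a.s.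
(with the estimated score process integrable), for every `M ≤ N`, at `t = M/N`,
`E[N^{−1/2} Σ_{i=1}^M u(yᵢ, θ̂)] = J · t · δ ∘ (h̄_M − h̄_N)`, where
`h̄_M = M⁻¹ Σ_{i=1}^M hᵢ` and `h̄_N = N⁻¹ Σ_{i=1}^N hᵢ`. -/
theorem estimated_score_process_drift
    {n p : ℕ} (σ : ℝ) (hσ : 0 < σ)
    (W : Matrix (Fin n) (Fin p) ℝ) (V : Matrix (Fin n) (Fin n) ℝ)
    (hV : V.PosDef)
    (u : (Fin n → ℝ) → (Fin p → ℝ) → (Fin p → ℝ))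
    (hu : ∀ y θ, u y θ = (σ ^ 2)⁻¹ • ((Wᵀ * V⁻¹) *ᵥ (y - W *ᵥ θ)))
    (J : Matrix (Fin p) (Fin p) ℝ)
    (hJ : J = (σ ^ 2)⁻¹ • (Wᵀ * V⁻¹ * W))
    {Ω : Type*} [MeasureSpace Ω] [IsProbabilityMeasure (volume : Measure Ω)]
    (N : ℕ) (hN : 0 < N) (y : ℕ → Ω → Fin n → ℝ)
    (hyInt : ∀ i, i < N → ∀ j, Integrable (fun ω => y i ω j))
    (θ₀ δ : Fin p → ℝ) (h : ℕ → Fin p → ℝ)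
    (hmean : ∀ i, i < N → ∀ j,
      ∫ ω, y i ω j = (W *ᵥ (θ₀ + (Real.sqrt N)⁻¹ • (δ * h i))) j)
    (θhat : Ω → Fin p → ℝ)
    (hscore : ∀ᵐ ω, ∑ i ∈ range N, u (y i ω) (θhat ω) = 0)
    (hestInt : ∀ i, i < N → ∀ k, Integrable (fun ω => u (y i ω) (θhat ω) k))
    (M : ℕ) (hM : 0 < M) (hMN : M ≤ N)
    (hbarM hbarN : Fin p → ℝ)
    (hhbarM : hbarM = (M : ℝ)⁻¹ • ∑ i ∈ range M, h i)
    (hhbarN : hbarN = (N : ℝ)⁻¹ • ∑ i ∈ range N, h i) :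
    ∀ k, ∫ ω, ((Real.sqrt N)⁻¹ • ∑ i ∈ range M, u (y i ω) (θhat ω)) k =
      (((M : ℝ) / N) • (J *ᵥ (δ * (hbarM - hbarN)))) k :=
  estimated_score_process_drift_general σ W V u hu J hJ N y hyInt θ₀ δ h hmean θhat hscore M hMN
    hbarM hbarN hhbarM hhbarN
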